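/- arXiv:0801.3444 — 2 statements merged into one kernel-verified Lean document; each statement's English description precedes it below -/
import Mathlib

section
/- Let a, b ≥ 0 and let g : (0, 1/2] → [0,∞) be a function such that sup_{r ∈ (1/4, 1/2]} g(r) < ∞ and such that g(ε) ≤ ( g(ε√2)² + b·g(ε√2) )^{1/2} + a for every ε ∈ (0, 2^{−3/2}]. Then there exists a constant K such that g(ε) ≤ K log(1/ε) for all ε ∈ (0, 1/2]. -/
/-!
Since `√(x² + b x) ≤ x + b/2`, the recursion gives `g ε ≤ g (ε√2) + (a + b/2)` for
`ε ≤ 1/4`. Multiplying `ε` by `√2` about `2 log₂ (1/ε)` times brings it into `(1/4, 1/2]`,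
where `g` is bounded, so `g ε` exceeds that bound by at most a multiple of `log (1/ε)`.
-/

open Real Set

theorem sqrt_sq_add_mul_le_add_half {x b : ℝ} (hx : 0 ≤ x) (hb : 0 ≤ b) :
    √(x ^ 2 + b * x) ≤ x + b / 2 :=
  Real.sqrt_le_iff.2 ⟨by positivity, by nlinarith⟩

theorem one_div_four_le_two_rpow_neg_three_div_two : (1 / 4 : ℝ) ≤ 2 ^ (-(3 : ℝ) / 2) := by
  rw [show (1 / 4 : ℝ) = 2 ^ (-2 : ℝ) by norm_num]
  exact Real.rpow_le_rpow_of_exponent_le (by norm_num) (by norm_num)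

theorem le_add_nat_mul_of_div_pow_lt {f : ℝ → ℝ} {q r U M C : ℝ} (hq : 0 < q)
    (hr : 0 ≤ r) (hrU : r * q ≤ U) (hC : 0 ≤ C)
    (hstep : ∀ ε ∈ Ioc 0 r, f ε ≤ f (ε * q) + C)
    (hM : ∀ ε ∈ Ioc r U, f ε ≤ M) :
    ∀ (n : ℕ) (ε : ℝ), r / q ^ n < ε → ε ≤ U → f ε ≤ M + n * C := by
  intro n
  induction n with
  | zero => intro ε hlt hle; simpa using hM ε ⟨by simpa using hlt, hle⟩
  | succ n ih =>
    intro ε hlt hle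
    rcases lt_or_ge r ε with hεr | hεr
    · have := hM ε ⟨hεr, hle⟩
      have : 0 ≤ ((n + 1 : ℕ) : ℝ) * C := by positivity
      linarith
    · have hε : 0 < ε := lt_of_le_of_lt (by positivity) hlt
      have hlt' : r / q ^ n < ε * q := by
        rwa [pow_succ, ← div_div, div_lt_iff₀ hq] at hlt
      have := ih (ε * q) hlt' ((mul_le_mul_of_nonneg_right hεr hq.le).trans hrU)
      have := hstep ε ⟨hε, hεr⟩
      push_cast
      linarith

theorem le_add_mul_log_inv_of_le_mul_add {f : ℝ → ℝ} {q r U M C : ℝ} (hq : 1 < q)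
    (hr : 0 < r) (hrU : r * q ≤ U) (hU : U ≤ 1) (hC : 0 ≤ C)
    (hstep : ∀ ε ∈ Ioc 0 r, f ε ≤ f (ε * q) + C) (hM : ∀ ε ∈ Ioc r U, f ε ≤ M) :
    ∀ ε ∈ Ioc 0 U, f ε ≤ (M + C) + C / log q * log ε⁻¹ := by
  intro ε ⟨hε, hεU⟩
  have hlogq : 0 < log q := log_pos hq
  have hlogε : 0 ≤ log ε⁻¹ := log_nonneg (one_le_inv₀ hε |>.2 (hεU.trans hU))
  rcases lt_or_ge r ε with hεr | hεr
  · have : 0 ≤ C / log q * log ε⁻¹ := by positivity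
    linarith [hM ε ⟨hεr, hεU⟩]
  set n := ⌊logb q (r / ε)⌋₊ + 1
  have hlogb : 0 ≤ logb q (r / ε) :=
    logb_nonneg hq ((one_le_div hε).2 hεr)
  have hn_lt : logb q (r / ε) < n := by exact_mod_cast Nat.lt_floor_add_one _
  have hn_le : (n : ℝ) ≤ log ε⁻¹ / log q + 1 := by
    have hlog_le : log (r / ε) ≤ log ε⁻¹ :=
      log_le_log (by positivity) (by rw [div_eq_mul_inv]; nlinarith [inv_pos.2 hε])
    have : logb q (r / ε) ≤ log ε⁻¹ / log q := div_le_div_of_nonneg_right hlog_le hlogq.le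
    push_cast [n]
    linarith [Nat.floor_le hlogb]
  have hpow : r / q ^ n < ε := by
    have := (logb_lt_iff_lt_rpow hq (by positivity)).1 hn_lt
    rw [rpow_natCast] at this
    exact (div_lt_comm₀ hε (by positivity)).1 this
  calc f ε ≤ M + n * C :=
        le_add_nat_mul_of_div_pow_lt (by linarith) hr.le hrU hC hstep hM n ε hpow hεU
    _ ≤ M + (log ε⁻¹ / log q + 1) * C := by gcongr
    _ = (M + C) + C / log q * log ε⁻¹ := by ring

theorem add_mul_log_inv_le_mul_log_inv {A B ε : ℝ} (hA : 0 ≤ A)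
    (hε : ε ∈ Ioc (0 : ℝ) (1 / 2)) :
    A + B * log ε⁻¹ ≤ (A / log 2 + B) * log ε⁻¹ := by
  have hlog2 : 0 < log 2 := log_pos (by norm_num)
  have h2 : log 2 ≤ log ε⁻¹ :=
    log_le_log (by norm_num) ((le_inv_comm₀ (by norm_num) hε.1).2 (by linarith [hε.2]))
  have : A ≤ A / log 2 * log ε⁻¹ := by
    rw [div_mul_eq_mul_div, le_div_iff₀ hlog2]
    exact mul_le_mul_of_nonneg_left h2 hA
  linarith

/-- the recursion argument in the proof of Proposition 2.1 for `d ≥ 3`.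
If `g : (0,1/2] → [0,∞)` is bounded on `(1/4,1/2]` and satisfies
`g(ε) ≤ (g(ε√2)² + b g(ε√2))^{1/2} + a` for all `ε ∈ (0, 2^{-3/2}]`, then there is a
constant `K` such that `g(ε) ≤ K log(1/ε)` on `(0,1/2]`. -/
theorem recursion_log_bound (a b : ℝ) (ha : 0 ≤ a) (hb : 0 ≤ b) (g : ℝ → ℝ)
    (hg0 : ∀ r ∈ Set.Ioc (0 : ℝ) (1 / 2), 0 ≤ g r)
    (hbdd : ∃ M : ℝ, ∀ r ∈ Set.Ioc (1 / 4 : ℝ) (1 / 2), g r ≤ M)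
    (hrec : ∀ ε ∈ Set.Ioc (0 : ℝ) (2 ^ (-(3 : ℝ) / 2)),
      g ε ≤ Real.sqrt (g (ε * Real.sqrt 2) ^ 2 + b * g (ε * Real.sqrt 2)) + a) :
    ∃ K : ℝ, ∀ ε ∈ Set.Ioc (0 : ℝ) (1 / 2), g ε ≤ K * Real.log ε⁻¹ := by
  obtain ⟨M, hM⟩ := hbdd
  have hM0 : 0 ≤ M := (hg0 (1 / 2) (by norm_num)).trans (hM (1 / 2) (by norm_num))
  have hsqrt2 : √2 ^ 2 = 2 := sq_sqrt (by norm_num)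
  have hsqrt2_le : √2 ≤ 2 := by nlinarith [sqrt_nonneg 2]
  have hstep : ∀ ε ∈ Ioc (0 : ℝ) (1 / 4), g ε ≤ g (ε * √2) + (a + b / 2) := by
    intro ε hε
    have hε' : ε * √2 ∈ Ioc (0 : ℝ) (1 / 2) :=
      ⟨by have := hε.1; positivity, by nlinarith [hε.1, hε.2]⟩
    calc g ε ≤ √(g (ε * √2) ^ 2 + b * g (ε * √2)) + a :=
          hrec ε ⟨hε.1, hε.2.trans one_div_four_le_two_rpow_neg_three_div_two⟩
      _ ≤ g (ε * √2) + b / 2 + a := by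
          gcongr; exact sqrt_sq_add_mul_le_add_half (hg0 _ hε') hb
      _ = g (ε * √2) + (a + b / 2) := by ring
  have hlog := le_add_mul_log_inv_of_le_mul_add one_lt_sqrt_two
    (by norm_num : (0 : ℝ) < 1 / 4) (by linarith) (by norm_num) (by positivity) hstep hM
  exact ⟨_, fun ε hε =>
    (hlog ε hε).trans (add_mul_log_inv_le_mul_log_inv (by positivity) hε)⟩
end

section
/- Let t_p > 0, K ≥ 0, M ≥ 0. For each n ≥ 1 let G_n : [0, t_p] → [0, M] be measurable and let b_n : [0, t_p] → [−M, M] be measurable, and assume: (i) G_n(t) ≤ b_n(t_p − t) + K ∫_0^t G_n(s) ds for every n ≥ 1 and every t ∈ [0, t_p]; (ii) b_n(r) → 0 as n → ∞ for Lebesgue-almost every r ∈ [0, t_p]. Then for every t ∈ [0, t_p] such that b_n(t_p − t) → 0 as n → ∞, one has G_n(t) → 0 as n → ∞. -/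
/-!
Let `Bₙ = ∫_0^{t_p} |bₙ|`; dominated convergence gives `Bₙ → 0`. Integrating the inequality over
`[0, s]` shows that the primitive `Iₙ(s) = ∫_0^s Gₙ` satisfies `Iₙ(s) ≤ Bₙ + K ∫_0^s Iₙ`, so
Grönwall's inequality gives `Iₙ(t) ≤ Bₙ e^{Kt}`. Hence `0 ≤ Gₙ(t) ≤ bₙ(t_p - t) + K Bₙ e^{Kt} → 0`.
-/

open MeasureTheory Real Set Filter
open scoped Topology

theorem add_mul_gronwallBound_zero (K ε x : ℝ) :
    ε + K * gronwallBound 0 K ε x = ε * exp (K * x) := by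
  rcases eq_or_ne K 0 with rfl | hK
  · simp [gronwallBound_K0]
  · rw [gronwallBound_of_K_ne_0 hK]
    field_simp
    ring

theorem continuousOn_primitive_Icc_of_le {f : ℝ → ℝ} {a b : ℝ} (hab : a ≤ b)
    (hf : IntegrableOn f (Icc a b)) : ContinuousOn (fun s => ∫ u in a..s, f u) (Icc a b) := by
  simpa only [uIcc_of_le hab] using
    intervalIntegral.continuousOn_primitive_interval (a := a) (b := b) (by rwa [uIcc_of_le hab])

theorem hasDerivWithinAt_primitive_Ici {I : ℝ → ℝ} {a b x : ℝ}
    (hI : ContinuousOn I (Icc a b)) (hx : x ∈ Ico a b) :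
    HasDerivWithinAt (fun s => ∫ u in a..s, I u) (I x) (Ici x) x := by
  have hmem : Icc a b ∈ 𝓝[>] x :=
    nhdsWithin_mono _ Ioi_subset_Ici_self (Icc_mem_nhdsGE_of_mem hx)
  exact intervalIntegral.integral_hasDerivWithinAt_right
    ((hI.mono (Icc_subset_Icc_right hx.2.le)).intervalIntegrable_of_Icc hx.1)
    ⟨Icc a b, hmem, hI.aestronglyMeasurable measurableSet_Icc⟩
    ((hI.continuousWithinAt (Ico_subset_Icc_self hx)).mono_of_mem_nhdsWithin hmem)

theorem le_mul_exp_of_le_add_mul_integral {I : ℝ → ℝ} {a b K ε : ℝ} (hK : 0 ≤ K)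
    (hI : ContinuousOn I (Icc a b)) (h : ∀ s ∈ Icc a b, I s ≤ ε + K * ∫ u in a..s, I u) :
    ∀ s ∈ Icc a b, I s ≤ ε * exp (K * (s - a)) := by
  intro s hs
  have hJ_le := le_gronwallBound_of_liminf_deriv_right_le (δ := 0) (K := K) (ε := ε)
    (continuousOn_primitive_Icc_of_le (hs.1.trans hs.2) hI.integrableOn_Icc)
    (fun x hx _ hr => (hasDerivWithinAt_primitive_Ici hI hx).liminf_right_slope_le hr)
    (by simp) (fun x hx => by linarith [h x (Ico_subset_Icc_self hx)]) s hs
  calc I s ≤ ε + K * ∫ u in a..s, I u := h s hs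
    _ ≤ ε + K * gronwallBound 0 K ε (s - a) := by gcongr
    _ = ε * exp (K * (s - a)) := add_mul_gronwallBound_zero K ε (s - a)

theorem tendsto_integral_abs_of_ae_tendsto_zero {α : Type*} [MeasurableSpace α]
    {μ : Measure α} [IsFiniteMeasure μ] {f : ℕ → α → ℝ} {M : ℝ}
    (hf : ∀ n, AEStronglyMeasurable (f n) μ) (hbound : ∀ n, ∀ᵐ x ∂μ, |f n x| ≤ M)
    (hlim : ∀ᵐ x ∂μ, Tendsto (fun n => f n x) atTop (𝓝 0)) :
    Tendsto (fun n => ∫ x, |f n x| ∂μ) atTop (𝓝 0) := by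
  simpa using tendsto_integral_of_dominated_convergence (F := fun n x => |f n x|)
    (f := fun _ => 0) (fun _ => M) (fun n => (hf n).norm) (integrable_const M)
    (fun n => by simpa using hbound n)
    (by filter_upwards [hlim] with x hx using by simpa using hx.abs)

theorem intervalIntegral_comp_sub_left_le_setIntegral_abs {f : ℝ → ℝ} {s T : ℝ}
    (hs : s ∈ Icc 0 T) (hf : IntegrableOn f (Icc 0 T)) :
    ∫ u in 0..s, f (T - u) ≤ ∫ r in Icc 0 T, |f r| := by
  have hsub : Ioc (T - s) T ⊆ Icc 0 T := fun r hr => ⟨by linarith [hr.1, hs.2], hr.2⟩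
  rw [intervalIntegral.integral_comp_sub_left, sub_zero,
    intervalIntegral.integral_of_le (by linarith [hs.1])]
  calc ∫ r in Ioc (T - s) T, f r ≤ ∫ r in Ioc (T - s) T, |f r| :=
        setIntegral_mono (hf.mono_set hsub) (hf.mono_set hsub).abs fun r => le_abs_self _
    _ ≤ ∫ r in Icc 0 T, |f r| :=
        setIntegral_mono_set hf.abs (ae_of_all _ fun r => abs_nonneg _) hsub.eventuallyLE

theorem integral_le_integral_add_mul_integral_primitive {g β : ℝ → ℝ} {a s K : ℝ}
    (has : a ≤ s) (hg : IntegrableOn g (Icc a s)) (hβ : IntervalIntegrable β volume a s)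
    (h : ∀ u ∈ Icc a s, g u ≤ β u + K * ∫ v in a..u, g v) :
    ∫ u in a..s, g u ≤ (∫ u in a..s, β u) + K * ∫ u in a..s, ∫ v in a..u, g v := by
  have hprim : IntervalIntegrable (fun u => ∫ v in a..u, g v) volume a s :=
    (continuousOn_primitive_Icc_of_le has hg).intervalIntegrable_of_Icc has
  rw [← intervalIntegral.integral_const_mul, ← intervalIntegral.integral_add hβ (hprim.const_mul K)]
  exact intervalIntegral.integral_mono_on has
    ((intervalIntegrable_iff_integrableOn_Icc_of_le has).2 hg) (hβ.add (hprim.const_mul K)) h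

theorem le_add_mul_exp_of_le_add_mul_integral {g β : ℝ → ℝ} {T K : ℝ} (hK : 0 ≤ K)
    (hg : IntegrableOn g (Icc 0 T)) (hβ : IntegrableOn β (Icc 0 T))
    (h : ∀ t ∈ Icc 0 T, g t ≤ β (T - t) + K * ∫ s in 0..t, g s) :
    ∀ t ∈ Icc 0 T, g t ≤ β (T - t) + K * ((∫ r in Icc 0 T, |β r|) * exp (K * t)) := by
  intro t ht
  have hprim : ∀ s ∈ Icc 0 T,
      ∫ u in 0..s, g u ≤ (∫ r in Icc 0 T, |β r|) + K * ∫ u in 0..s, ∫ v in 0..u, g v := by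
    intro s hs
    have hβs : IntervalIntegrable (fun u => β (T - u)) volume 0 s := by
      have hβ' : IntervalIntegrable β volume (T - s) T :=
        (intervalIntegrable_iff_integrableOn_Icc_of_le (by linarith [hs.1])).2
          (hβ.mono_set (Icc_subset_Icc (by linarith [hs.2]) le_rfl))
      simpa using (hβ'.comp_sub_left T).symm
    refine (integral_le_integral_add_mul_integral_primitive hs.1
      (hg.mono_set (Icc_subset_Icc_right hs.2)) hβs
      fun u hu => h u ⟨hu.1, hu.2.trans hs.2⟩).trans ?_
    gcongr
    exact intervalIntegral_comp_sub_left_le_setIntegral_abs hs hβ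
  have hgron := le_mul_exp_of_le_add_mul_integral hK
    (continuousOn_primitive_Icc_of_le (ht.1.trans ht.2) hg) hprim t ht
  calc g t ≤ β (T - t) + K * ∫ s in 0..t, g s := h t ht
    _ ≤ _ := by gcongr; simpa using hgron

theorem gronwall_iteration_convergence_general (tp K M : ℝ) (hK : 0 ≤ K)
    (G b : ℕ → ℝ → ℝ)
    (hGmeas : ∀ n, Measurable (G n)) (hbmeas : ∀ n, Measurable (b n))
    (hGrange : ∀ n, ∀ t ∈ Set.Icc (0 : ℝ) tp, G n t ∈ Set.Icc (0 : ℝ) M)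
    (hbrange : ∀ n, ∀ t ∈ Set.Icc (0 : ℝ) tp, |b n t| ≤ M)
    (hineq : ∀ n, ∀ t ∈ Set.Icc (0 : ℝ) tp,
      G n t ≤ b n (tp - t) + K * ∫ s in (0 : ℝ)..t, G n s)
    (hbconv : ∀ᵐ r ∂(volume.restrict (Set.Icc (0 : ℝ) tp)),
      Filter.Tendsto (fun n => b n r) Filter.atTop (nhds 0)) :
    ∀ t ∈ Set.Icc (0 : ℝ) tp,
      Filter.Tendsto (fun n => b n (tp - t)) Filter.atTop (nhds 0) →
      Filter.Tendsto (fun n => G n t) Filter.atTop (nhds 0) := by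
  intro t ht hbt
  have hint : ∀ f : ℝ → ℝ, Measurable f → (∀ x ∈ Icc 0 tp, |f x| ≤ M) →
      IntegrableOn f (Icc 0 tp) := fun f hf hbd =>
    Measure.integrableOn_of_bounded measure_Icc_lt_top.ne hf.aestronglyMeasurable
      (ae_restrict_of_forall_mem measurableSet_Icc hbd)
  have hG : ∀ n, IntegrableOn (G n) (Icc 0 tp) := fun n => hint _ (hGmeas n) fun x hx => by
    rw [abs_of_nonneg (hGrange n x hx).1]; exact (hGrange n x hx).2
  have hB := tendsto_integral_abs_of_ae_tendsto_zero (fun n => (hbmeas n).aestronglyMeasurable)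
    (fun n => ae_restrict_of_forall_mem measurableSet_Icc (hbrange n)) hbconv
  have hupper := fun n => le_add_mul_exp_of_le_add_mul_integral hK (hG n)
    (hint _ (hbmeas n) (hbrange n)) (hineq n) t ht
  have hlim : Tendsto (fun n => b n (tp - t) + K * ((∫ r in Icc 0 tp, |b n r|) * exp (K * t)))
      atTop (𝓝 0) := by
    simpa using hbt.add ((hB.mul_const (exp (K * t))).const_mul K)
  exact tendsto_of_tendsto_of_tendsto_of_le_of_le tendsto_const_nhds hlim
    (fun n => (hGrange n t ht).1) hupper

/-- the Gronwall-type iteration in the proof of Proposition 3.1.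
If `G_n : [0,t_p] → [0,M]` satisfies `G_n(t) ≤ b_n(t_p - t) + K ∫_0^t G_n(s) ds`,
`|b_n| ≤ M`, and `b_n(r) → 0` for Lebesgue-a.e. `r ∈ [0,t_p]`, then `G_n(t) → 0` for every
`t ∈ [0,t_p]` at which also `b_n(t_p - t) → 0`. -/
theorem gronwall_iteration_convergence (tp K M : ℝ) (htp : 0 < tp) (hK : 0 ≤ K)
    (hM : 0 ≤ M) (G b : ℕ → ℝ → ℝ)
    (hGmeas : ∀ n, Measurable (G n)) (hbmeas : ∀ n, Measurable (b n))
    (hGrange : ∀ n, ∀ t ∈ Set.Icc (0 : ℝ) tp, G n t ∈ Set.Icc (0 : ℝ) M)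
    (hbrange : ∀ n, ∀ t ∈ Set.Icc (0 : ℝ) tp, |b n t| ≤ M)
    (hineq : ∀ n, ∀ t ∈ Set.Icc (0 : ℝ) tp,
      G n t ≤ b n (tp - t) + K * ∫ s in (0 : ℝ)..t, G n s)
    (hbconv : ∀ᵐ r ∂(volume.restrict (Set.Icc (0 : ℝ) tp)),
      Filter.Tendsto (fun n => b n r) Filter.atTop (nhds 0)) :
    ∀ t ∈ Set.Icc (0 : ℝ) tp,
      Filter.Tendsto (fun n => b n (tp - t)) Filter.atTop (nhds 0) →
      Filter.Tendsto (fun n => G n t) Filter.atTop (nhds 0) :=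
  gronwall_iteration_convergence_general tp K M hK G b hGmeas hbmeas hGrange hbrange hineq hbconv
end
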